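/- If ρ is a 4×4 density matrix on ℂ²⊗ℂ² of zero-discord form ρ = Σ_{k=1,2} p_k |e_k⟩⟨e_k| ⊗ σ_k with {|e_k⟩} an orthonormal basis of ℂ² and σ_k density matrices, then every 2×2 principal minor of ρ is invariant under partial transposition on the second system: PM_{nm}(ρ) = PM_{nm}(ρ^{τ_B}) for all 1 ≤ n < m ≤ 4. -/

import Mathlib

open Matrix Kronecker ComplexOrder

/-- Partial transpose on the second tensor factor. -/
def ptB {m n : ℕ} (ρ : Matrix (Fin m × Fin n) (Fin m × Fin n) ℂ) :
    Matrix (Fin m × Fin n) (Fin m × Fin n) ℂ :=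
  fun p q => ρ (p.1, q.2) (q.1, p.2)

/-- The 2×2 principal minor of a matrix on the rows/columns indexed by `a` and `b`. -/
def PM {ι : Type*} (A : Matrix ι ι ℂ) (a b : ι) : ℂ :=
  A a a * A b b - A a b * A b a

/-- Outer product |v⟩⟨v|. -/
noncomputable def outer {n : Type*} (v : n → ℂ) : Matrix n n ℂ :=
  Matrix.vecMulVec v (fun j => star (v j))

/-!
The partial transpose fixes the diagonal, so a principal minor can change only through the product
`ρ (i,a) (j,b) * ρ (j,b) (i,a)` of its off-diagonal entries. Writing `c k = e k i * conj (e k j)`,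
the two products differ by `p 0 * p 1 * (c 0 * conj (c 1) - c 1 * conj (c 0))` times a factor
built from the `σ k`. Completeness of the basis gives `c 0 + c 1 = δ i j`, which makes
`c 0 * conj (c 1)` real, so the difference vanishes.
-/

theorem PM_ptB {m n : ℕ} (ρ : Matrix (Fin m × Fin n) (Fin m × Fin n) ℂ) (i j : Fin m)
    (a b : Fin n) :
    PM (ptB ρ) (i, a) (j, b) =
      ρ (i, a) (i, a) * ρ (j, b) (j, b) - ρ (i, b) (j, a) * ρ (j, a) (i, b) :=
  rfl

theorem PM_ptB_eq_PM_of_mul_comm {m n : ℕ} (ρ : Matrix (Fin m × Fin n) (Fin m × Fin n) ℂ)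
    (h : ∀ i j a b, ρ (i, a) (j, b) * ρ (j, b) (i, a) = ρ (i, b) (j, a) * ρ (j, a) (i, b)) :
    ∀ x y, PM ρ x y = PM (ptB ρ) x y := by
  rintro ⟨i, a⟩ ⟨j, b⟩
  rw [PM_ptB, PM, h]

theorem sum_mul_star_eq_ite_of_orthonormal {ι : Type*} [Fintype ι] [DecidableEq ι]
    (e : ι → ι → ℂ) (horth : ∀ k l, ∑ j, star (e k j) * e l j = if k = l then 1 else 0)
    (i j : ι) : ∑ k, e k i * star (e k j) = if i = j then 1 else 0 := by
  let V : Matrix ι ι ℂ := Matrix.of fun j k => e k j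
  have hVV : Vᴴ * V = 1 := by
    ext k l
    simpa [V, Matrix.mul_apply, Matrix.one_apply] using horth k l
  have hVV' : V * Vᴴ = 1 := mul_eq_one_comm.mp hVV
  simpa [V, Matrix.mul_apply, Matrix.one_apply] using congrFun (congrFun hVV' i) j

theorem mul_star_comm_of_sum_eq_ite {m : Type*} [DecidableEq m] (e : Fin 2 → m → ℂ) (i j : m)
    (h : ∑ k, e k i * star (e k j) = if i = j then 1 else 0) :
    e 0 i * star (e 0 j) * (e 1 j * star (e 1 i)) =
      e 1 i * star (e 1 j) * (e 0 j * star (e 0 i)) := by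
  rw [Fin.sum_univ_two] at h
  split_ifs at h with hij
  · subst hij
    ring
  · have h' := congrArg star h
    simp only [star_add, star_mul, star_star, star_zero] at h'
    linear_combination e 0 i * star (e 0 j) * h' - e 0 j * star (e 0 i) * h

theorem sum_smul_outer_kronecker_apply {κ m n : Type*} [Fintype κ] (p : κ → ℝ)
    (e : κ → m → ℂ) (σ : κ → Matrix n n ℂ) (i j : m) (a b : n) :
    (∑ k, (p k : ℂ) • (outer (e k) ⊗ₖ σ k)) (i, a) (j, b) =
      ∑ k, (p k : ℂ) * (e k i * star (e k j)) * σ k a b := by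
  simp only [Matrix.sum_apply, Matrix.smul_apply, Matrix.kroneckerMap_apply, outer,
    Matrix.vecMulVec_apply, smul_eq_mul, mul_assoc]

theorem sum_smul_outer_kronecker_mul_comm {m n : Type*} [DecidableEq m] (p : Fin 2 → ℝ)
    (e : Fin 2 → m → ℂ) (σ : Fin 2 → Matrix n n ℂ) (i j : m) (a b : n)
    (hcomp : ∑ k, e k i * star (e k j) = if i = j then 1 else 0) :
    let ρ := ∑ k, (p k : ℂ) • (outer (e k) ⊗ₖ σ k)
    ρ (i, a) (j, b) * ρ (j, b) (i, a) = ρ (i, b) (j, a) * ρ (j, a) (i, b) := by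
  have hphase := mul_star_comm_of_sum_eq_ite e i j hcomp
  simp only [sum_smul_outer_kronecker_apply, Fin.sum_univ_two]
  linear_combination (p 0 : ℂ) * p 1 * (σ 0 a b * σ 1 b a - σ 1 a b * σ 0 b a) * hphase

theorem stmt2_general (ρ : Matrix (Fin 2 × Fin 2) (Fin 2 × Fin 2) ℂ)
    (p : Fin 2 → ℝ) (e : Fin 2 → (Fin 2 → ℂ)) (σ : Fin 2 → Matrix (Fin 2) (Fin 2) ℂ)
    (horth : ∀ k l, ∑ j, star (e k j) * e l j = if k = l then 1 else 0)
    (hdecomp : ρ = ∑ k, (p k : ℂ) • (outer (e k) ⊗ₖ σ k)) :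
    ∀ a b : Fin 2 × Fin 2, PM ρ a b = PM (ptB ρ) a b := by
  subst hdecomp
  exact PM_ptB_eq_PM_of_mul_comm _ fun i j a b =>
    sum_smul_outer_kronecker_mul_comm p e σ i j a b
      (sum_mul_star_eq_ite_of_orthonormal e horth i j)

theorem stmt2 (ρ : Matrix (Fin 2 × Fin 2) (Fin 2 × Fin 2) ℂ)
    (hρ : ρ.PosSemidef) (htr : ρ.trace = 1)
    (p : Fin 2 → ℝ) (e : Fin 2 → (Fin 2 → ℂ)) (σ : Fin 2 → Matrix (Fin 2) (Fin 2) ℂ)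
    (hp : ∀ k, 0 ≤ p k) (hpsum : ∑ k, p k = 1)
    (horth : ∀ k l, ∑ j, star (e k j) * e l j = if k = l then 1 else 0)
    (hσpsd : ∀ k, (σ k).PosSemidef) (hσtr : ∀ k, (σ k).trace = 1)
    (hdecomp : ρ = ∑ k, (p k : ℂ) • (outer (e k) ⊗ₖ σ k)) :
    ∀ a b : Fin 2 × Fin 2, PM ρ a b = PM (ptB ρ) a b :=
  stmt2_general ρ p e σ horth hdecomp
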